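/- arXiv:1207.1500 — 3 statements merged into one kernel-verified Lean document; each statement's English description precedes it below -/
import Mathlib

section
/- If a graph H on n vertices contains no complete subgraph K_k, then H has at most ((k-2)/(k-1))·n²/2 edges. -/
open Finset

namespace SimpleGraph

variable {V : Type*} [Fintype V] {G : SimpleGraph V} [DecidableRel G.Adj] {r : ℕ}

theorem CliqueFree.two_mul_mul_card_edgeFinset_le (hr : 0 < r) (cf : G.CliqueFree (r + 1)) :
    2 * r * #G.edgeFinset ≤ (r - 1) * Fintype.card V ^ 2 := by
  obtain ⟨T, _, hT⟩ := exists_isTuranMaximal (V := V) hr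
  have hle : #G.edgeFinset ≤ #T.edgeFinset := hT.2 cf
  rw [hT.nonempty_iso_turanGraph.some.card_edgeFinset_eq] at hle
  calc 2 * r * #G.edgeFinset ≤ 2 * r * #(turanGraph (Fintype.card V) r).edgeFinset := by gcongr
    _ ≤ (r - 1) * Fintype.card V ^ 2 := mul_card_edgeFinset_turanGraph_le

end SimpleGraph

theorem turan_bound_general {V : Type*} [Fintype V] (n k : ℕ)
    (hn : Fintype.card V = n) (hk : 2 ≤ k)
    (H : SimpleGraph V) [DecidableRel H.Adj] (hfree : H.CliqueFree k) :
    (H.edgeFinset.card : ℝ) ≤ (((k : ℝ) - 2) / ((k : ℝ) - 1)) * (n : ℝ) ^ 2 / 2 := by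
  obtain ⟨r, rfl⟩ : ∃ r, k = r + 1 := ⟨k - 1, by omega⟩
  have hr : 0 < r := by omega
  have hbound : 2 * r * (#H.edgeFinset : ℝ) ≤ (r - 1) * n ^ 2 := by
    have := hfree.two_mul_mul_card_edgeFinset_le hr
    rw [hn] at this
    have hcast := (Nat.cast_le (α := ℝ)).2 this
    push_cast [Nat.cast_sub hr] at hcast
    exact hcast
  have hk' : ((r + 1 : ℕ) : ℝ) - 2 = r - 1 ∧ ((r + 1 : ℕ) : ℝ) - 1 = r := by
    constructor <;> push_cast <;> ring
  rw [hk'.1, hk'.2, div_mul_eq_mul_div, div_div, le_div_iff₀ (by positivity)]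
  linarith

/-- Turán's theorem bound: a `K_k`-free simple graph on `n` vertices has at most
`((k-2)/(k-1)) * n^2 / 2` edges. -/
theorem turan_bound {V : Type*} [Fintype V] [DecidableEq V] (n k : ℕ)
    (hn : Fintype.card V = n) (hk : 2 ≤ k)
    (H : SimpleGraph V) [DecidableRel H.Adj] (hfree : H.CliqueFree k) :
    (H.edgeFinset.card : ℝ) ≤ (((k : ℝ) - 2) / ((k : ℝ) - 1)) * (n : ℝ) ^ 2 / 2 :=
  turan_bound_general n k hn hk H hfree
end

section
/- Let T be a tree on n vertices in which every vertex is either a leaf or adjacent to a leaf, and suppose there are at least n/2 non-leaf vertices each adjacent to a leaf. Then n is even, T has exactly n/2 leaves and n/2 non-leaf vertices, and every non-leaf vertex is adjacent to exactly one leaf. -/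
open Finset

/-- If every vertex of a tree `T` on `n` vertices is a leaf or adjacent to a leaf, and at
least `n/2` of the non-leaf vertices are each adjacent to a leaf, then `n` is even, `T`
has exactly `n/2` leaves and `n/2` non-leaf vertices, and every non-leaf vertex is
adjacent to exactly one leaf. -/
theorem tree_half_internal_matched {V : Type*} [Fintype V] [DecidableEq V]
    (T : SimpleGraph V) [DecidableRel T.Adj] (hT : T.IsTree) (n : ℕ)
    (hn : Fintype.card V = n)
    (hcover : ∀ v : V, T.degree v = 1 ∨ ∃ u : V, T.Adj v u ∧ T.degree u = 1)
    (hhalf : (n : ℝ) / 2 ≤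
      ((univ.filter fun v : V =>
        T.degree v ≠ 1 ∧ ∃ u : V, T.Adj v u ∧ T.degree u = 1).card : ℝ)) :
    Even n ∧
    2 * (univ.filter fun v : V => T.degree v = 1).card = n ∧
    2 * (univ.filter fun v : V => T.degree v ≠ 1).card = n ∧
    ∀ v : V, T.degree v ≠ 1 → ∃! u : V, T.Adj v u ∧ T.degree u = 1 := by
  classical
  -- a vertex of degree 1 has a unique neighbor
  have leafuniq : ∀ u a b : V, T.degree u = 1 → T.Adj u a → T.Adj u b → a = b := by
    intro u a b hu ha hb
    have h1 : (T.neighborFinset u).card ≤ 1 := by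
      rw [T.card_neighborFinset_eq_degree, hu]
    exact Finset.card_le_one.mp h1 a (by simpa using ha) b (by simpa using hb)
  set L := univ.filter fun v : V => T.degree v = 1 with hLdef
  set I := univ.filter fun v : V => T.degree v ≠ 1 with hIdef
  have hIeq : (univ.filter fun v : V =>
      T.degree v ≠ 1 ∧ ∃ u : V, T.Adj v u ∧ T.degree u = 1) = I := by
    ext v
    simp only [hIdef, mem_filter, mem_univ, true_and]
    constructor
    · exact fun h => h.1
    · intro h; exact ⟨h, (hcover v).resolve_left h⟩
  have hsum : L.card + I.card = n := by
    rw [hLdef, hIdef, ← hn, ← Finset.card_univ]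
    exact Finset.card_filter_add_card_filter_not _
  -- choice function picking a leaf neighbor
  let f : V → V := fun v =>
    if h : ∃ u : V, T.Adj v u ∧ T.degree u = 1 then h.choose else v
  have hf : ∀ v ∈ I, T.Adj v (f v) ∧ T.degree (f v) = 1 := by
    intro v hv
    have hv' : T.degree v ≠ 1 := by
      simpa [hIdef] using hv
    have h : ∃ u : V, T.Adj v u ∧ T.degree u = 1 := (hcover v).resolve_left hv'
    have hfv : f v = h.choose := dif_pos h
    rw [hfv]
    exact h.choose_spec
  have hmaps : ∀ v ∈ I, f v ∈ L := by
    intro v hv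
    simp only [hLdef, mem_filter, mem_univ, true_and]
    exact (hf v hv).2
  have hinj : Set.InjOn f I := by
    intro a ha b hb hab
    exact leafuniq (f a) a b (hf a ha).2 (hf a ha).1.symm (hab ▸ (hf b hb).1.symm)
  have hle : I.card ≤ L.card := Finset.card_le_card_of_injOn f hmaps hinj
  rw [hIeq] at hhalf
  have h2I : n ≤ 2 * I.card := by
    have : (n : ℝ) ≤ 2 * (I.card : ℝ) := by linarith
    exact_mod_cast this
  have hIcard : 2 * I.card = n := by omega
  have hLcard : 2 * L.card = n := by omega
  refine ⟨⟨I.card, by omega⟩, hLcard, hIcard, ?_⟩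
  intro v hv
  have hvI : v ∈ I := by simp [hIdef, hv]
  obtain ⟨u, hu, hud⟩ := (hcover v).resolve_left hv
  refine ⟨u, ⟨hu, hud⟩, ?_⟩
  intro y ⟨hy, hyd⟩
  by_contra hne
  -- y and u are two distinct leaf neighbors of v; derive a counting contradiction
  have hyL : y ∈ L := by simp [hLdef, hyd]
  let f' : V → V := fun w => if w = v then u else f w
  have hmaps' : ∀ w ∈ I, f' w ∈ L.erase y := by
    intro w hw
    by_cases hwv : w = v
    · simp only [f', if_pos hwv, Finset.mem_erase]
      refine ⟨fun h => hne h.symm, ?_⟩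
      simp [hLdef, hud]
    · simp only [f', if_neg hwv, Finset.mem_erase]
      refine ⟨?_, hmaps w hw⟩
      intro hfy
      apply hwv
      exact leafuniq y w v hyd (hfy ▸ (hf w hw).1.symm) hy.symm
  have hinj' : Set.InjOn f' I := by
    intro a ha b hb hab
    by_cases hav : a = v <;> by_cases hbv : b = v
    · rw [hav, hbv]
    · exfalso
      apply hbv
      simp only [f', if_pos hav, if_neg hbv] at hab
      exact (leafuniq u b v (hab ▸ (hf b hb).2) (hab ▸ (hf b hb).1.symm) hu.symm)
    · exfalso
      apply hav
      simp only [f', if_neg hav, if_pos hbv] at hab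
      exact (leafuniq u a v (hab ▸ (hf a ha).2) (hab ▸ (hf a ha).1.symm) hu.symm)
    · simp only [f', if_neg hav, if_neg hbv] at hab
      exact hinj ha hb hab
  have hle' : I.card ≤ (L.erase y).card :=
    Finset.card_le_card_of_injOn f' hmaps' hinj'
  have herase : (L.erase y).card = L.card - 1 := Finset.card_erase_of_mem hyL
  have hyL1 : 1 ≤ L.card := Finset.card_pos.mpr ⟨y, hyL⟩
  omega
end

section
/- Let m ≥ 2 and consider 2m+1 points p_0, p_1, …, p_{2m} in convex position with p_0 on the hull, the rest sorted by angle around p_0 with all angles spanning less than π. Then the straight-line drawing of the spider tree S_m mapping the center to p_0, each u_i to p_{2i−1}, and each leaf v_i to p_{2i} is non-crossing. -/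
/-- The plane. -/
local notation "Plane" => EuclideanSpace ℝ (Fin 2)

/-- `p i p j` is a convex hull edge of the point set: there is a (nonzero) affine line
`{x | f x = c}` through `p i` and `p j` with all other points strictly on one side. -/
def IsHullEdge {n : ℕ} (p : Fin n → Plane) (i j : Fin n) : Prop :=
  i ≠ j ∧ ∃ (f : Plane →ₗ[ℝ] ℝ) (c : ℝ), f ≠ 0 ∧ f (p i) = c ∧ f (p j) = c ∧
    ∀ k : Fin n, k ≠ i → k ≠ j → f (p k) < c

/-- `p` lists points in convex position in cyclic order: each consecutive pair `p i p (i+1)`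
is a hull edge. -/
def CyclicConvexPos {n : ℕ} [NeZero n] (p : Fin n → Plane) : Prop :=
  ∀ i : Fin n, IsHullEdge p i (i + 1)

/-- No three of the points are collinear. -/
def GenPos {n : ℕ} (p : Fin n → Plane) : Prop :=
  ∀ i j k : Fin n, i ≠ j → j ≠ k → i ≠ k → ¬ Collinear ℝ ({p i, p j, p k} : Set Plane)

/-- The segments `p i p j` and `p k p l` cross: their open segments intersect. -/
def Crosses {n : ℕ} (p : Fin n → Plane) (i j k l : Fin n) : Prop :=
  ∃ x : Plane, x ∈ openSegment ℝ (p i) (p j) ∧ x ∈ openSegment ℝ (p k) (p l)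

/-- The middle vertex `u_i` of the spider drawing: the point `p_{2i+1}`. -/
def uIdx (m : ℕ) (i : Fin m) : Fin (2 * m + 1) :=
  ⟨2 * (i : ℕ) + 1, by omega⟩

/-- The leaf `v_i` of the spider drawing: the point `p_{2i+2}`. -/
def vIdx (m : ℕ) (i : Fin m) : Fin (2 * m + 1) :=
  ⟨2 * (i : ℕ) + 2, by omega⟩

lemma seg_param {a b x : Plane} (h : x ∈ openSegment ℝ a b) :
    ∃ t : ℝ, 0 < t ∧ x - a = t • (b - a) := by
  obtain ⟨ta, tb, hta, htb, hsum, rfl⟩ := h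
  refine ⟨tb, htb, ?_⟩
  have h1 : ta = 1 - tb := by linarith
  subst h1
  module

lemma rev_param {a b x : Plane} {t : ℝ} (ht : 0 < t) (h : x - a = t • (b - a)) :
    b - a = t⁻¹ • (x - a) := by
  rw [h, smul_smul, inv_mul_cancel₀ ht.ne', one_smul]

lemma collinear_of_smul {a y z v : Plane} {r s : ℝ}
    (hy : y - a = r • v) (hz : z - a = s • v) :
    Collinear ℝ ({a, y, z} : Set Plane) := by
  rw [collinear_iff_of_mem (Set.mem_insert a {y, z})]
  refine ⟨v, ?_⟩
  rintro q (rfl | rfl | rfl)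
  · exact ⟨0, by simp⟩
  · exact ⟨r, by rw [← hy]; simp [vadd_eq_add]⟩
  · exact ⟨s, by rw [← hz]; simp [vadd_eq_add]⟩

lemma collinear_of_two_opens {a b d x : Plane}
    (h1 : x ∈ openSegment ℝ a b) (h2 : x ∈ openSegment ℝ a d) :
    Collinear ℝ ({a, b, d} : Set Plane) := by
  obtain ⟨t, ht, hxt⟩ := seg_param h1
  obtain ⟨s, hs, hxs⟩ := seg_param h2
  exact collinear_of_smul (rev_param ht hxt) (rev_param hs hxs)

lemma not_cross_of_sep {a b u v : Plane} (f : Plane →ₗ[ℝ] ℝ) (c : ℝ)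
    (ha : f a < c) (hb : f b < c) (hu : f u = c) (hv : f v = c) :
    ¬ ∃ x, x ∈ openSegment ℝ a b ∧ x ∈ openSegment ℝ u v := by
  rintro ⟨x, hx1, hx2⟩
  have h1 : f x < c :=
    (convex_halfSpace_lt (f.isLinear) c).openSegment_subset ha hb hx1
  obtain ⟨ta, tb, hta, htb, hsum, rfl⟩ := hx2
  simp only [f.map_add, f.map_smul, smul_eq_mul, hu, hv] at h1
  have hc : ta * c + tb * c = c := by rw [← add_mul, hsum, one_mul]
  linarith

lemma succ_u (m : ℕ) (j : Fin m) : uIdx m j + 1 = vIdx m j := by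
  apply Fin.ext
  have hj : (j : ℕ) < m := j.isLt
  simp only [uIdx, vIdx, Fin.add_def, Fin.val_one']
  rw [Nat.mod_eq_of_lt (show (1 : ℕ) < 2 * m + 1 by omega),
    Nat.mod_eq_of_lt (by omega)]

/-- For `m ≥ 2` and `2m+1` points in convex position listed cyclically starting at the
hull point `p_0` (so `p_1, …, p_{2m}` are sorted by angle around `p_0`), the straight-line
drawing of the spider `S_m` sending the center to `p_0`, each `u_i` to `p_{2i-1}` and each
leaf `v_i` to `p_{2i}` is non-crossing. -/
theorem spider_drawing_noncrossing (m : ℕ) (hm : 2 ≤ m)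
    (p : Fin (2 * m + 1) → Plane) (hgp : GenPos p) (hcc : CyclicConvexPos p) :
    (∀ i j : Fin m, i ≠ j → ¬ Crosses p 0 (uIdx m i) 0 (uIdx m j)) ∧
    (∀ i j : Fin m, i ≠ j →
      ¬ Crosses p (uIdx m i) (vIdx m i) (uIdx m j) (vIdx m j)) ∧
    (∀ i j : Fin m, ¬ Crosses p 0 (uIdx m i) (uIdx m j) (vIdx m j)) := by
  have hvz : ((0 : Fin (2 * m + 1)) : ℕ) = 0 := rfl
  have hne0u : ∀ i : Fin m, (0 : Fin (2 * m + 1)) ≠ uIdx m i := by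
    intro i h
    have := congrArg Fin.val h
    simp only [uIdx, hvz] at this
    omega
  have hne0v : ∀ i : Fin m, (0 : Fin (2 * m + 1)) ≠ vIdx m i := by
    intro i h
    have := congrArg Fin.val h
    simp only [vIdx, hvz] at this
    omega
  have hneuv : ∀ i j : Fin m, uIdx m i ≠ vIdx m j := by
    intro i j h
    have := congrArg Fin.val h
    simp only [uIdx, vIdx] at this
    omega
  have hneuu : ∀ i j : Fin m, i ≠ j → uIdx m i ≠ uIdx m j := by
    intro i j hij h
    have h2 := congrArg Fin.val h
    simp only [uIdx] at h2
    exact hij (Fin.ext (by omega))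
  have hnevv : ∀ i j : Fin m, i ≠ j → vIdx m i ≠ vIdx m j := by
    intro i j hij h
    have h2 := congrArg Fin.val h
    simp only [vIdx] at h2
    exact hij (Fin.ext (by omega))
  have hedge : ∀ j : Fin m, IsHullEdge p (uIdx m j) (vIdx m j) := by
    intro j
    have := hcc (uIdx m j)
    rwa [succ_u] at this
  refine ⟨?_, ?_, ?_⟩
  · -- spoke vs spoke: share p 0, would force collinearity
    rintro i j hij ⟨x, hx1, hx2⟩
    exact hgp 0 (uIdx m i) (uIdx m j) (hne0u i) (hneuu i j hij) (hne0u j)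
      (collinear_of_two_opens hx1 hx2)
  · -- leg vs leg: leg j is a hull edge; leg i lies strictly on one side
    rintro i j hij ⟨x, hx1, hx2⟩
    obtain ⟨-, f, c, -, hu, hv, hlt⟩ := hedge j
    exact not_cross_of_sep f c
      (hlt (uIdx m i) (hneuu i j hij) (hneuv i j))
      (hlt (vIdx m i) (Ne.symm (hneuv j i)) (hnevv i j hij))
      hu hv ⟨x, hx1, hx2⟩
  · -- spoke i vs leg j
    rintro i j ⟨x, hx1, hx2⟩
    by_cases hij : i = j
    · -- shared endpoint p (uIdx m i): collinearity
      subst hij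
      have hx1' : x ∈ openSegment ℝ (p (uIdx m i)) (p 0) := by
        rwa [openSegment_symm] at hx1
      exact hgp (uIdx m i) 0 (vIdx m i) (Ne.symm (hne0u i)) (hne0v i) (hneuv i i)
        (collinear_of_two_opens hx1' hx2)
    · obtain ⟨-, f, c, -, hu, hv, hlt⟩ := hedge j
      exact not_cross_of_sep f c
        (hlt 0 (hne0u j) (hne0v j))
        (hlt (uIdx m i) (hneuu i j hij) (hneuv i j))
        hu hv ⟨x, hx1, hx2⟩
end
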